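/- arXiv:1702.05829 — 3 statements merged into one kernel-verified Lean document; each statement's English description precedes it below -/
import Mathlib

section
/- If C1 and C2 are bivariate copulas and 0 < θ < 1, then the gluing function C(u,v) defined by C(u,v) = θ·C1(u/θ, v) for 0 ≤ u ≤ θ, and C(u,v) = (1−θ)·C2((u−θ)/(1−θ), v) + θ·v for θ ≤ u ≤ 1, is itself a bivariate copula. -/
def IsCopula (C : ℝ → ℝ → ℝ) : Prop :=
  (∀ u ∈ Set.Icc (0:ℝ) 1, C u 0 = 0) ∧
  (∀ v ∈ Set.Icc (0:ℝ) 1, C 0 v = 0) ∧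
  (∀ u ∈ Set.Icc (0:ℝ) 1, C u 1 = u) ∧
  (∀ v ∈ Set.Icc (0:ℝ) 1, C 1 v = v) ∧
  (∀ u₁ u₂ v₁ v₂ : ℝ, 0 ≤ u₁ → u₁ ≤ u₂ → u₂ ≤ 1 → 0 ≤ v₁ → v₁ ≤ v₂ → v₂ ≤ 1 →
    0 ≤ C u₂ v₂ - C u₂ v₁ - C u₁ v₂ + C u₁ v₁)

noncomputable def glueCopula (C₁ C₂ : ℝ → ℝ → ℝ) (θ : ℝ) (u v : ℝ) : ℝ :=
  if u ≤ θ then θ * C₁ (u / θ) v else (1 - θ) * C₂ ((u - θ) / (1 - θ)) v + θ * v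

/-!
Each half of the glued function is, on its strip `[0, θ] × [0, 1]` or `[θ, 1] × [0, 1]`, a
nonnegative multiple of a copula composed with an increasing affine map in `u`, plus a function
of `v` alone; such a function puts nonnegative mass on every rectangle inside the strip. The two
formulas agree on the line `u = θ`, so the mass of a rectangle straddling that line is the sum of
the masses of its two halves.
-/

open Set

def rectMass (C : ℝ → ℝ → ℝ) (u₁ u₂ v₁ v₂ : ℝ) : ℝ :=
  C u₂ v₂ - C u₂ v₁ - C u₁ v₂ + C u₁ v₁

theorem rectMass_add_rectMass (C : ℝ → ℝ → ℝ) (u₁ u₂ u₃ v₁ v₂ : ℝ) :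
    rectMass C u₁ u₂ v₁ v₂ + rectMass C u₂ u₃ v₁ v₂ = rectMass C u₁ u₃ v₁ v₂ := by
  unfold rectMass
  ring

def TwoIncreasingOn (C : ℝ → ℝ → ℝ) (a b : ℝ) : Prop :=
  ∀ u₁ u₂ v₁ v₂ : ℝ, a ≤ u₁ → u₁ ≤ u₂ → u₂ ≤ b → 0 ≤ v₁ → v₁ ≤ v₂ → v₂ ≤ 1 →
    0 ≤ rectMass C u₁ u₂ v₁ v₂

theorem TwoIncreasingOn.trans {C : ℝ → ℝ → ℝ} {a b c : ℝ}
    (hab : TwoIncreasingOn C a b) (hbc : TwoIncreasingOn C b c) : TwoIncreasingOn C a c := by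
  intro u₁ u₂ v₁ v₂ hu₁ hu₁₂ hu₂ hv₁ hv₁₂ hv₂
  rcases le_total u₂ b with hu₂b | hbu₂
  · exact hab u₁ u₂ v₁ v₂ hu₁ hu₁₂ hu₂b hv₁ hv₁₂ hv₂
  rcases le_total b u₁ with hbu₁ | hu₁b
  · exact hbc u₁ u₂ v₁ v₂ hbu₁ hu₁₂ hu₂ hv₁ hv₁₂ hv₂
  rw [← rectMass_add_rectMass C u₁ b u₂]
  exact add_nonneg (hab u₁ b v₁ v₂ hu₁ hu₁b le_rfl hv₁ hv₁₂ hv₂)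
    (hbc b u₂ v₁ v₂ le_rfl hbu₂ hu₂ hv₁ hv₁₂ hv₂)

theorem TwoIncreasingOn.of_eqOn_comp {C D : ℝ → ℝ → ℝ} {φ g : ℝ → ℝ} {a b c : ℝ}
    (hC : TwoIncreasingOn C 0 1) (hc : 0 ≤ c) (hφ : MonotoneOn φ (Icc a b))
    (hφI : MapsTo φ (Icc a b) (Icc 0 1))
    (hD : ∀ u ∈ Icc a b, ∀ v ∈ Icc (0 : ℝ) 1, D u v = c * C (φ u) v + g v) :
    TwoIncreasingOn D a b := by
  intro u₁ u₂ v₁ v₂ hu₁ hu₁₂ hu₂ hv₁ hv₁₂ hv₂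
  have hu₁I : u₁ ∈ Icc a b := ⟨hu₁, hu₁₂.trans hu₂⟩
  have hu₂I : u₂ ∈ Icc a b := ⟨hu₁.trans hu₁₂, hu₂⟩
  have hv₁I : v₁ ∈ Icc (0 : ℝ) 1 := ⟨hv₁, hv₁₂.trans hv₂⟩
  have hv₂I : v₂ ∈ Icc (0 : ℝ) 1 := ⟨hv₁.trans hv₁₂, hv₂⟩
  have hmass : rectMass D u₁ u₂ v₁ v₂ = c * rectMass C (φ u₁) (φ u₂) v₁ v₂ := by
    simp only [rectMass, hD u₁ hu₁I v₁ hv₁I, hD u₁ hu₁I v₂ hv₂I, hD u₂ hu₂I v₁ hv₁I,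
      hD u₂ hu₂I v₂ hv₂I]
    ring
  rw [hmass]
  exact mul_nonneg hc <|
    hC _ _ v₁ v₂ (hφI hu₁I).1 (hφ hu₁I hu₂I hu₁₂) (hφI hu₂I).2 hv₁ hv₁₂ hv₂

namespace IsCopula

variable {C : ℝ → ℝ → ℝ} {u v : ℝ}

theorem apply_zero_right (hC : IsCopula C) (hu : u ∈ Icc 0 1) : C u 0 = 0 := hC.1 u hu

theorem apply_zero_left (hC : IsCopula C) (hv : v ∈ Icc 0 1) : C 0 v = 0 := hC.2.1 v hv

theorem apply_one_right (hC : IsCopula C) (hu : u ∈ Icc 0 1) : C u 1 = u := hC.2.2.1 u hu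

theorem apply_one_left (hC : IsCopula C) (hv : v ∈ Icc 0 1) : C 1 v = v := hC.2.2.2.1 v hv

theorem twoIncreasingOn (hC : IsCopula C) : TwoIncreasingOn C 0 1 := hC.2.2.2.2

end IsCopula

theorem div_mem_Icc_zero_one {a b : ℝ} (ha : 0 ≤ a) (hab : a ≤ b) : a / b ∈ Icc 0 1 :=
  ⟨div_nonneg ha (ha.trans hab), div_le_one_of_le₀ hab (ha.trans hab)⟩

section glueCopula

variable {C₁ C₂ : ℝ → ℝ → ℝ} {θ u v : ℝ}

theorem glueCopula_of_le (hu : u ≤ θ) : glueCopula C₁ C₂ θ u v = θ * C₁ (u / θ) v :=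
  if_pos hu

theorem glueCopula_of_ge (h₁ : IsCopula C₁) (h₂ : IsCopula C₂) (hu : θ ≤ u)
    (hv : v ∈ Icc 0 1) :
    glueCopula C₁ C₂ θ u v = (1 - θ) * C₂ ((u - θ) / (1 - θ)) v + θ * v := by
  rcases hu.lt_or_eq with hθu | rfl
  · exact if_neg hθu.not_ge
  rw [glueCopula_of_le le_rfl, sub_self, zero_div, h₂.apply_zero_left hv]
  rcases eq_or_ne θ 0 with rfl | hθ0
  · simp
  · rw [div_self hθ0, h₁.apply_one_left hv]
    ring

theorem glueCopula_apply_zero_right (h₁ : IsCopula C₁) (h₂ : IsCopula C₂) (hu : u ∈ Icc 0 1) :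
    glueCopula C₁ C₂ θ u 0 = 0 := by
  rcases le_total u θ with huθ | hθu
  · rw [glueCopula_of_le huθ, h₁.apply_zero_right (div_mem_Icc_zero_one hu.1 huθ), mul_zero]
  · rw [glueCopula_of_ge h₁ h₂ hθu ⟨le_rfl, zero_le_one⟩,
      h₂.apply_zero_right (div_mem_Icc_zero_one (sub_nonneg.2 hθu) (sub_le_sub_right hu.2 θ))]
    ring

theorem glueCopula_apply_zero_left (h₁ : IsCopula C₁) (hθ : 0 ≤ θ) (hv : v ∈ Icc 0 1) :
    glueCopula C₁ C₂ θ 0 v = 0 := by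
  rw [glueCopula_of_le hθ, zero_div, h₁.apply_zero_left hv, mul_zero]

theorem glueCopula_apply_one_right (h₁ : IsCopula C₁) (h₂ : IsCopula C₂) (hθ0 : 0 < θ)
    (hθ1 : θ < 1) (hu : u ∈ Icc 0 1) : glueCopula C₁ C₂ θ u 1 = u := by
  rcases le_total u θ with huθ | hθu
  · rw [glueCopula_of_le huθ, h₁.apply_one_right (div_mem_Icc_zero_one hu.1 huθ)]
    field_simp
  · rw [glueCopula_of_ge h₁ h₂ hθu ⟨zero_le_one, le_rfl⟩,
      h₂.apply_one_right (div_mem_Icc_zero_one (sub_nonneg.2 hθu) (sub_le_sub_right hu.2 θ))]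
    field_simp [(sub_pos.2 hθ1).ne']
    ring

theorem glueCopula_apply_one_left (h₁ : IsCopula C₁) (h₂ : IsCopula C₂) (hθ : θ < 1)
    (hv : v ∈ Icc 0 1) : glueCopula C₁ C₂ θ 1 v = v := by
  rw [glueCopula_of_ge h₁ h₂ hθ.le hv, div_self (sub_pos.2 hθ).ne', h₂.apply_one_left hv]
  ring

theorem twoIncreasingOn_glueCopula (h₁ : IsCopula C₁) (h₂ : IsCopula C₂) (hθ0 : 0 < θ)
    (hθ1 : θ < 1) : TwoIncreasingOn (glueCopula C₁ C₂ θ) 0 1 := by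
  have hleft : TwoIncreasingOn (glueCopula C₁ C₂ θ) 0 θ :=
    h₁.twoIncreasingOn.of_eqOn_comp (g := 0) hθ0.le
      (fun _ _ _ _ h => div_le_div_of_nonneg_right h hθ0.le)
      (fun _ hu => div_mem_Icc_zero_one hu.1 hu.2)
      (fun _ hu _ _ => by rw [glueCopula_of_le hu.2, Pi.zero_apply, add_zero])
  have hright : TwoIncreasingOn (glueCopula C₁ C₂ θ) θ 1 :=
    h₂.twoIncreasingOn.of_eqOn_comp (sub_pos.2 hθ1).le
      (fun _ _ _ _ h => div_le_div_of_nonneg_right (sub_le_sub_right h θ) (sub_pos.2 hθ1).le)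
      (fun _ hu => div_mem_Icc_zero_one (sub_nonneg.2 hu.1) (sub_le_sub_right hu.2 θ))
      (fun _ hu _ hv => glueCopula_of_ge h₁ h₂ hu.1 hv)
  exact hleft.trans hright

end glueCopula

theorem gluing_is_copula (C₁ C₂ : ℝ → ℝ → ℝ) (θ : ℝ)
    (h₁ : IsCopula C₁) (h₂ : IsCopula C₂) (hθ0 : 0 < θ) (hθ1 : θ < 1) :
    IsCopula (glueCopula C₁ C₂ θ) :=
  ⟨fun _ hu => glueCopula_apply_zero_right h₁ h₂ hu,
    fun _ hv => glueCopula_apply_zero_left h₁ hθ0.le hv,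
    fun _ hu => glueCopula_apply_one_right h₁ h₂ hθ0 hθ1 hu,
    fun _ hv => glueCopula_apply_one_left h₁ h₂ hθ1 hv,
    twoIncreasingOn_glueCopula h₁ h₂ hθ0 hθ1⟩
end

section
/- For 0 < θ < 1, Spearman's rho of the copula C_θ equals 2θ − 1, where ρ = 12·∫∫_{[0,1]²} C_θ(u,v) du dv − 3 and C_θ(u,v) = u if u ≤ θv, θv if θv < u < 1−(1−θ)v, and u+v−1 if u ≥ 1−(1−θ)v. -/
/-! For `v ≤ 1`, `Ctheta θ u v = max (min u (θ v)) (u + v - 1)`, so `v ↦ Ctheta θ u v` is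
piecewise linear with a single kink, at `v = u / θ` when `u ≤ θ` and at `v = (1 - u) / (1 - θ)`
when `θ ≤ u`. The inner integral is therefore `u - u² / (2θ)`, resp.
`u - 1/2 + (1 - u)² / (2(1 - θ))`, and integrating these over `[0, θ]` and `[θ, 1]` gives
`θ² / 3 + (1 - θ) / 2 - (1 - θ)² / 3 = (2θ + 2) / 12`. -/

noncomputable def Ctheta (θ u v : ℝ) : ℝ :=
  if u ≤ θ * v then u else if u < 1 - (1 - θ) * v then θ * v else u + v - 1

open Set intervalIntegral

theorem Ctheta_eq_max_min (θ u : ℝ) {v : ℝ} (hv : v ≤ 1) :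
    Ctheta θ u v = max (min u (θ * v)) (u + v - 1) := by
  unfold Ctheta
  split_ifs with h₁ h₂
  · rw [min_eq_left h₁, max_eq_left (by linarith)]
  · rw [min_eq_right (by linarith), max_eq_left (by linarith)]
  · rw [min_eq_right (by linarith), max_eq_right (by linarith)]

theorem intervalIntegral_eq_add_of_eqOn_Icc {f g h : ℝ → ℝ} {a b c : ℝ} (hab : a ≤ b)
    (hbc : b ≤ c) (hg : ContinuousOn g (Icc a b)) (hh : ContinuousOn h (Icc b c))
    (hfg : EqOn f g (Icc a b)) (hfh : EqOn f h (Icc b c)) :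
    ∫ x in a..c, f x = (∫ x in a..b, g x) + ∫ x in b..c, h x := by
  rw [← integral_add_adjacent_intervals
    ((hg.congr hfg).intervalIntegrable_of_Icc hab) ((hh.congr hfh).intervalIntegrable_of_Icc hbc),
    integral_congr (hfg.mono (uIcc_of_le hab).subset),
    integral_congr (hfh.mono (uIcc_of_le hbc).subset)]

theorem integral_Ctheta_of_le {θ u : ℝ} (hθ₀ : 0 < θ) (hθ₁ : θ ≤ 1) (hu : 0 ≤ u)
    (huθ : u ≤ θ) : ∫ v in (0:ℝ)..1, Ctheta θ u v = u - u ^ 2 / (2 * θ) := by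
  have ha₀ : 0 ≤ u / θ := div_nonneg hu hθ₀.le
  have ha₁ : u / θ ≤ 1 := (div_le_one hθ₀).2 huθ
  have hθa : θ * (u / θ) = u := mul_div_cancel₀ u hθ₀.ne'
  rw [intervalIntegral_eq_add_of_eqOn_Icc (g := fun v => θ * v) (h := fun _ => u) ha₀ ha₁
    (by fun_prop) (by fun_prop)]
  · rw [intervalIntegral.integral_const_mul, integral_id, integral_const, smul_eq_mul]
    field_simp
    ring
  · rintro v ⟨-, hva⟩
    have hθv : θ * v ≤ u := hθa ▸ mul_le_mul_of_nonneg_left hva hθ₀.le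
    have : (1 - θ) * v ≤ (1 - θ) * (u / θ) := mul_le_mul_of_nonneg_left hva (by linarith)
    rw [Ctheta_eq_max_min θ u (hva.trans ha₁), min_eq_right hθv, max_eq_left (by linarith)]
  · rintro v ⟨hav, hv₁⟩
    have : u ≤ θ * v := hθa ▸ mul_le_mul_of_nonneg_left hav hθ₀.le
    rw [Ctheta_eq_max_min θ u hv₁, min_eq_left this, max_eq_left (by linarith)]

theorem integral_Ctheta_of_ge {θ u : ℝ} (hθ₀ : 0 ≤ θ) (hθ₁ : θ < 1) (huθ : θ ≤ u)
    (hu : u ≤ 1) :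
    ∫ v in (0:ℝ)..1, Ctheta θ u v = u - 1 / 2 + (1 - u) ^ 2 / (2 * (1 - θ)) := by
  have hθ' : 0 < 1 - θ := by linarith
  have hb₀ : 0 ≤ (1 - u) / (1 - θ) := div_nonneg (by linarith) hθ'.le
  have hb₁ : (1 - u) / (1 - θ) ≤ 1 := (div_le_one hθ').2 (by linarith)
  have hθb : (1 - θ) * ((1 - u) / (1 - θ)) = 1 - u := mul_div_cancel₀ _ hθ'.ne'
  rw [intervalIntegral_eq_add_of_eqOn_Icc (g := fun v => θ * v) (h := fun v => v + (u - 1))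
    hb₀ hb₁ (by fun_prop) (by fun_prop)]
  · rw [intervalIntegral.integral_const_mul, integral_add intervalIntegrable_id
      intervalIntegrable_const, integral_id, integral_id, integral_const, smul_eq_mul]
    field_simp
    ring
  · rintro v ⟨-, hvb⟩
    have h₁ : (1 - θ) * v ≤ 1 - u := hθb ▸ mul_le_mul_of_nonneg_left hvb hθ'.le
    have h₂ : θ * (1 - θ) * v ≤ θ * (1 - u) := by nlinarith
    have hθv : θ * v ≤ u := by nlinarith
    rw [Ctheta_eq_max_min θ u (hvb.trans hb₁), min_eq_right hθv, max_eq_left (by linarith)]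
  · rintro v ⟨hbv, hv₁⟩
    have : 1 - u ≤ (1 - θ) * v := hθb ▸ mul_le_mul_of_nonneg_left hbv hθ'.le
    rw [Ctheta_eq_max_min θ u hv₁, max_eq_right ((min_le_right _ _).trans (by linarith))]
    ring

theorem Ctheta_spearman_rho (θ : ℝ) (hθ0 : 0 < θ) (hθ1 : θ < 1) :
    12 * (∫ u in (0:ℝ)..1, ∫ v in (0:ℝ)..1, Ctheta θ u v) - 3 = 2 * θ - 1 := by
  have hθ' : 1 - θ ≠ 0 := by linarith
  have hcont {a b : ℝ} {f : ℝ → ℝ} (hf : Continuous f) :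
      IntervalIntegrable f MeasureTheory.volume a b :=
    hf.intervalIntegrable a b
  have h₁ : ∫ u in (0:ℝ)..θ, (u - u ^ 2 / (2 * θ)) = θ ^ 2 / 3 := by
    rw [integral_sub (hcont (by fun_prop)) (hcont (by fun_prop)), integral_div, integral_id,
      integral_pow]
    field_simp
    ring
  have h₂ : ∫ u in θ..1, (u - 1 / 2 + (1 - u) ^ 2 / (2 * (1 - θ))) =
      (1 - θ) / 2 - (1 - θ) ^ 2 / 3 := by
    rw [integral_add (hcont (by fun_prop)) (hcont (by fun_prop)),
      integral_sub (hcont (by fun_prop)) (hcont (by fun_prop)), integral_div (2 * (1 - θ)),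
      integral_comp_sub_left (fun x => x ^ 2), integral_id, integral_pow, integral_const]
    field_simp
    ring
  rw [intervalIntegral_eq_add_of_eqOn_Icc hθ0.le hθ1.le (by fun_prop)
    (by fun_prop (disch := exact hθ')) (fun u hu => integral_Ctheta_of_le hθ0 hθ1.le hu.1 hu.2)
    (fun u hu => integral_Ctheta_of_ge hθ0.le hθ1 hu.1 hu.2), h₁, h₂]
  ring
end

section
/- For 0 < θ < 1, the Schweizer–Wolff measure of the copula C_θ equals θ² + (θ−1)², where σ = 12·∫∫_{[0,1]²} |C_θ(u,v) − uv| du dv and C_θ(u,v) = u if u ≤ θv, θv if θv < u < 1−(1−θ)v, and u+v−1 if u ≥ 1−(1−θ)v. -/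
/-!
For fixed `u`, the integrand `v ↦ |C_θ(u,v) - u v|` is a tent on `[0,1]`: it equals
`min ((θ - u) v) (u (1 - v))` for `u ≤ θ` and `min ((u - θ) v) ((1 - u)(1 - v))`
for `u ≥ θ`.
A tent `min (a v) (b (1 - v))` has area `a b / (2 (a + b))`, so the inner integral is the
parabolic arc `u (θ - u) / (2θ)` on `[0, θ]` and `(u - θ)(1 - u) / (2(1 - θ))` on `[θ, 1]`,
whose integrals are `θ² / 12` and `(1 - θ)² / 12`.
-/

open MeasureTheory Set

theorem integral_eq_add_of_eqOn {f g₁ g₂ : ℝ → ℝ} {a b c : ℝ}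
    (hg₁ : IntervalIntegrable g₁ volume a c) (hg₂ : IntervalIntegrable g₂ volume c b)
    (h₁ : EqOn f g₁ (uIcc a c)) (h₂ : EqOn f g₂ (uIcc c b)) :
    ∫ x in a..b, f x = (∫ x in a..c, g₁ x) + ∫ x in c..b, g₂ x := by
  rw [← intervalIntegral.integral_add_adjacent_intervals
    ((intervalIntegrable_congr (h₁.mono uIoc_subset_uIcc)).2 hg₁)
    ((intervalIntegrable_congr (h₂.mono uIoc_subset_uIcc)).2 hg₂),
    intervalIntegral.integral_congr h₁, intervalIntegral.integral_congr h₂]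

theorem integral_sub_mul_sub (a b : ℝ) : ∫ x in a..b, (x - a) * (b - x) = (b - a) ^ 3 / 6 := by
  have expand : ∀ x, (x - a) * (b - x) = (a + b) * x - a * b - x ^ 2 := fun x => by ring
  simp only [expand]
  rw [intervalIntegral.integral_sub, intervalIntegral.integral_sub,
    intervalIntegral.integral_const_mul, integral_id, integral_pow, intervalIntegral.integral_const]
  · simp only [smul_eq_mul, Nat.reduceAdd, Nat.cast_ofNat]
    ring
  all_goals exact Continuous.intervalIntegrable (by fun_prop) _ _

theorem integral_min_mul_mul_one_sub {a b : ℝ} (ha : 0 ≤ a) (hb : 0 ≤ b) :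
    ∫ v in (0:ℝ)..1, min (a * v) (b * (1 - v)) = a * b / (2 * (a + b)) := by
  rcases (add_nonneg ha hb).eq_or_lt with hab | hab
  · obtain ⟨rfl, rfl⟩ : a = 0 ∧ b = 0 := ⟨by linarith, by linarith⟩
    simp
  set c := b / (a + b)
  have hc0 : 0 ≤ c := by positivity
  have hc1 : c ≤ 1 := div_le_one_of_le₀ (by linarith) hab.le
  rw [integral_eq_add_of_eqOn (g₁ := fun v => a * v) (g₂ := fun v => b * (1 - v)) (c := c)
    (Continuous.intervalIntegrable (by fun_prop) _ _)
    (Continuous.intervalIntegrable (by fun_prop) _ _)]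
  · simp only [intervalIntegral.integral_const_mul _ (fun x => x),
      intervalIntegral.integral_const_mul, intervalIntegral.integral_comp_sub_left (fun x => x),
      integral_id, c]
    field_simp
    ring
  · intro v hv
    rw [uIcc_of_le hc0] at hv
    have : v * (a + b) ≤ b := (le_div_iff₀ hab).1 hv.2
    exact min_eq_left (by nlinarith)
  · intro v hv
    rw [uIcc_of_le hc1] at hv
    have : b ≤ v * (a + b) := (div_le_iff₀ hab).1 hv.1
    exact min_eq_right (by nlinarith)

variable {θ u v : ℝ}

theorem abs_Ctheta_sub_mul_of_le (hθ1 : θ < 1) (hu : u ∈ Icc 0 θ) (hv : v ∈ Icc 0 1) :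
    |Ctheta θ u v - u * v| = min ((θ - u) * v) (u * (1 - v)) := by
  obtain ⟨hu0, huθ⟩ := hu
  obtain ⟨hv0, hv1⟩ := hv
  unfold Ctheta
  split_ifs with h₁ h₂
  · rw [abs_of_nonneg (by nlinarith), min_eq_right (by nlinarith)]; ring
  · rw [abs_of_nonneg (by nlinarith), min_eq_left (by nlinarith)]; ring
  · exfalso; nlinarith

theorem abs_Ctheta_sub_mul_of_ge (hθ0 : 0 < θ) (hu : u ∈ Icc θ 1) (hv : v ∈ Icc 0 1) :
    |Ctheta θ u v - u * v| = min ((u - θ) * v) ((1 - u) * (1 - v)) := by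
  obtain ⟨hθu, hu1⟩ := hu
  obtain ⟨hv0, hv1⟩ := hv
  unfold Ctheta
  split_ifs with h₁ h₂
  · obtain rfl : v = 1 := by nlinarith
    rw [sub_self, mul_zero, min_eq_right (by nlinarith)]; simp
  · rw [abs_of_nonpos (by nlinarith), min_eq_left (by nlinarith)]; ring
  · rw [abs_of_nonpos (by nlinarith), min_eq_right (by nlinarith)]; ring

theorem integral_abs_Ctheta_sub_mul_of_le (hθ1 : θ < 1) (hu : u ∈ Icc 0 θ) :
    ∫ v in (0:ℝ)..1, |Ctheta θ u v - u * v| = (u - 0) * (θ - u) / (2 * θ) := by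
  rw [intervalIntegral.integral_congr fun v hv => abs_Ctheta_sub_mul_of_le hθ1 hu
      (by rwa [uIcc_of_le zero_le_one] at hv),
    integral_min_mul_mul_one_sub (by linarith [hu.2]) hu.1]
  congr 1 <;> ring

theorem integral_abs_Ctheta_sub_mul_of_ge (hθ0 : 0 < θ) (hu : u ∈ Icc θ 1) :
    ∫ v in (0:ℝ)..1, |Ctheta θ u v - u * v| = (u - θ) * (1 - u) / (2 * (1 - θ)) := by
  rw [intervalIntegral.integral_congr fun v hv => abs_Ctheta_sub_mul_of_ge hθ0 hu
      (by rwa [uIcc_of_le zero_le_one] at hv),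
    integral_min_mul_mul_one_sub (by linarith [hu.1]) (by linarith [hu.2])]
  congr 2; ring

theorem Ctheta_schweizer_wolff (θ : ℝ) (hθ0 : 0 < θ) (hθ1 : θ < 1) :
    12 * (∫ u in (0:ℝ)..1, ∫ v in (0:ℝ)..1, |Ctheta θ u v - u * v|) = θ ^ 2 + (θ - 1) ^ 2 := by
  rw [integral_eq_add_of_eqOn (c := θ)
      (Continuous.intervalIntegrable (by fun_prop) _ _)
      (Continuous.intervalIntegrable (by fun_prop) _ _)
      (fun u hu => integral_abs_Ctheta_sub_mul_of_le hθ1 (by rwa [uIcc_of_le hθ0.le] at hu))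
      (fun u hu => integral_abs_Ctheta_sub_mul_of_ge hθ0 (by rwa [uIcc_of_le hθ1.le] at hu)),
    intervalIntegral.integral_div, intervalIntegral.integral_div,
    integral_sub_mul_sub, integral_sub_mul_sub]
  have : 1 - θ ≠ 0 := by linarith
  field_simp
  ring
end
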